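/- Define b(q,v) = ∑_{p=0}^{v} (−1)^p C(v,p) s(p+1, p−q+1) with s the signed Stirling numbers of the first kind. Then for 0 ≤ q ≤ v, b(q,v) = (−1)^{v−q} v! ∑ ∏_{i=1}^{v−q} 1/k_i, where the sum runs over all integer tuples 0 = k_0 < k_1 < ⋯ < k_{v−q} < k_{v−q+1} = v+2 satisfying k_i − k_{i−1} ≥ 2 for all i = 1,…,v−q+1. -/
import Mathlib

open Finset Polynomial

/-- Signed Stirling numbers of the first kind: coefficient of x^k in x(x-1)⋯(x-n+1),
zero for negative k. -/
noncomputable def stirlingFst (n : ℕ) (k : ℤ) : ℤ :=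
  if 0 ≤ k then (∏ i ∈ Finset.range n, (X - C (i : ℤ))).coeff k.toNat else 0

/-- b(q,v) = ∑_{p=0}^{v} (−1)^p C(v,p) s(p+1, p−q+1). -/
noncomputable def b (q v : ℕ) : ℤ :=
  ∑ p ∈ Finset.range (v + 1), (-1 : ℤ) ^ p * (v.choose p) * stirlingFst (p + 1) ((p : ℤ) - q + 1)

lemma stirlingFst_neg (n : ℕ) (k : ℤ) (h : k < 0) : stirlingFst n k = 0 := by
  simp [stirlingFst, not_le.mpr h]

lemma stirlingFst_nonpos (n : ℕ) (k : ℤ) (hk : k ≤ 0) : stirlingFst (n + 1) k = 0 := by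
  rcases lt_or_eq_of_le hk with h | h
  · exact stirlingFst_neg _ _ h
  · subst h
    simp only [stirlingFst, if_pos le_rfl, Int.toNat_zero]
    rw [Polynomial.coeff_zero_eq_eval_zero, Polynomial.eval_prod]
    apply Finset.prod_eq_zero (Finset.mem_range.mpr (Nat.succ_pos n))
    simp [Polynomial.natDegree_X_sub_C]

lemma stirlingFst_diag (n : ℕ) : stirlingFst n (n : ℤ) = 1 := by
  have hm : (∏ i ∈ Finset.range n, (X - C (i : ℤ))).Monic :=
    monic_prod_of_monic _ _ (fun i _ => monic_X_sub_C _)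
  have hd : (∏ i ∈ Finset.range n, (X - C (i : ℤ))).natDegree = n := by
    rw [Polynomial.natDegree_prod _ _ (fun i _ => X_sub_C_ne_zero _)]
    calc ∑ i ∈ Finset.range n, (X - C (i:ℤ)).natDegree
        = ∑ _i ∈ Finset.range n, 1 :=
          Finset.sum_congr rfl (fun i _ => Polynomial.natDegree_X_sub_C _)
      _ = n := by simp
  have := hm.coeff_natDegree
  rw [hd] at this
  simp only [stirlingFst, if_pos (Int.natCast_nonneg n), Int.toNat_natCast]
  exact this

lemma stirlingFst_rec (n : ℕ) (k : ℤ) :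
    stirlingFst (n + 1) k = stirlingFst n (k - 1) - n * stirlingFst n k := by
  rcases le_or_gt k 0 with hk | hk
  · rw [stirlingFst_nonpos n k hk, stirlingFst_neg n (k - 1) (by omega)]
    rcases lt_or_eq_of_le hk with h | h
    · rw [stirlingFst_neg n k h]; ring
    · subst h
      cases n with
      | zero => simp
      | succ n => rw [stirlingFst_nonpos n 0 le_rfl]; ring
  · obtain ⟨m, rfl⟩ : ∃ m : ℕ, k = (m : ℤ) + 1 := ⟨(k - 1).toNat, by omega⟩
    have h1 : ((m : ℤ) + 1).toNat = m + 1 := by omega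
    have h2 : ((m : ℤ) + 1 - 1).toNat = m := by omega
    simp only [stirlingFst, if_pos (by omega : (0:ℤ) ≤ (m:ℤ) + 1),
      if_pos (by omega : (0:ℤ) ≤ (m:ℤ) + 1 - 1), h1, h2]
    rw [Finset.prod_range_succ, mul_sub, coeff_sub, coeff_mul_X, coeff_mul_C]
    ring

lemma b_zero_of_lt (q v : ℕ) (h : v < q) : b q v = 0 := by
  apply Finset.sum_eq_zero
  intro p hp
  rw [stirlingFst_nonpos p ((p : ℤ) - q + 1)
    (by have := Finset.mem_range.mp hp; omega), mul_zero]

lemma b_zero_zero : b 0 0 = 1 := by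
  rw [b, Finset.sum_range_one]
  have h : ((0:ℕ) : ℤ) - (0:ℕ) + 1 = ((1:ℕ) : ℤ) := by norm_num
  rw [h, stirlingFst_diag 1]
  norm_num

lemma b_zero_succ (v : ℕ) : b 0 (v + 1) = 0 := by
  rw [b]
  have h : ∀ p ∈ Finset.range (v + 2),
      (-1 : ℤ) ^ p * ((v+1).choose p) * stirlingFst (p + 1) ((p : ℤ) - (0:ℕ) + 1)
      = (-1 : ℤ) ^ p * ((v+1).choose p) := by
    intro p _
    have h1 : (p : ℤ) - (0:ℕ) + 1 = ((p + 1 : ℕ) : ℤ) := by push_cast; ring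
    rw [h1, stirlingFst_diag (p + 1), mul_one]
  rw [Finset.sum_congr rfl h, Int.alternating_sum_range_choose]
  simp

noncomputable def cseq (q V : ℕ) : ℤ :=
  ∑ r ∈ Finset.range V, (-1 : ℤ) ^ r * (V.choose (r + 1)) * stirlingFst (r + 1) ((r : ℤ) - q)

lemma cseq_succ (q V : ℕ) : cseq q (V + 1) = b (q + 1) V + cseq q V := by
  rw [cseq]
  have h : ∀ r ∈ Finset.range (V + 1),
      (-1 : ℤ) ^ r * ((V+1).choose (r + 1)) * stirlingFst (r + 1) ((r : ℤ) - q)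
      = (-1 : ℤ) ^ r * (V.choose r) * stirlingFst (r + 1) ((r : ℤ) - q)
        + (-1 : ℤ) ^ r * (V.choose (r + 1)) * stirlingFst (r + 1) ((r : ℤ) - q) := by
    intro r _
    have : ((V+1).choose (r + 1) : ℤ) = (V.choose r : ℤ) + (V.choose (r + 1) : ℤ) := by
      exact_mod_cast Nat.choose_succ_succ V r
    rw [this]; ring
  rw [Finset.sum_congr rfl h, Finset.sum_add_distrib]
  congr 1
  · rw [b]
    apply Finset.sum_congr rfl
    intro p _
    congr 2
    push_cast; ring
  · rw [Finset.sum_range_succ, Nat.choose_succ_self]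
    rw [cseq]
    simp

lemma b_succ_eq (q v : ℕ) : b (q + 1) (v + 1) = ((v : ℤ) + 1) * b q v - cseq q (v + 1) := by
  rw [b, Finset.sum_range_succ']
  have hzero : (-1 : ℤ) ^ 0 * ((v+1).choose 0) * stirlingFst (0 + 1) (((0:ℕ) : ℤ) - (q + 1 : ℕ) + 1) = 0 := by
    rw [stirlingFst_nonpos 0 _ (by push_cast; omega), mul_zero]
  rw [hzero, add_zero]
  have hterm : ∀ i ∈ Finset.range (v + 1),
      (-1 : ℤ) ^ (i + 1) * ((v+1).choose (i + 1)) * stirlingFst (i + 1 + 1) (((i + 1 : ℕ) : ℤ) - (q + 1 : ℕ) + 1)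
      = ((v : ℤ) + 1) * ((-1 : ℤ) ^ i * (v.choose i) * stirlingFst (i + 1) ((i : ℤ) - q + 1))
        - (-1 : ℤ) ^ i * ((v+1).choose (i + 1)) * stirlingFst (i + 1) ((i : ℤ) - q) := by
    intro i _
    have hk : ((i + 1 : ℕ) : ℤ) - (q + 1 : ℕ) + 1 = (i : ℤ) - q + 1 := by push_cast; ring
    rw [hk, stirlingFst_rec (i + 1) ((i : ℤ) - q + 1)]
    have hk2 : (i : ℤ) - q + 1 - 1 = (i : ℤ) - q := by ring
    rw [hk2]
    have hc : ((v : ℤ) + 1) * (v.choose i : ℤ) = ((v+1).choose (i + 1) : ℤ) * ((i : ℤ) + 1) := by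
      exact_mod_cast Nat.add_one_mul_choose_eq v i
    push_cast
    linear_combination (-(-1 : ℤ) ^ i * stirlingFst (i + 1) ((i : ℤ) - q + 1)) * hc
  rw [Finset.sum_congr rfl hterm, Finset.sum_sub_distrib, ← Finset.mul_sum]
  rw [b, cseq]

lemma b_rec (q v : ℕ) :
    b (q + 1) (v + 2) = ((v : ℤ) + 2) * b q (v + 1) - ((v : ℤ) + 1) * b q v := by
  have h1 : b (q + 1) (v + 2) = ((v : ℤ) + 2) * b q (v + 1) - cseq q (v + 2) := by
    have := b_succ_eq q (v + 1); push_cast at this ⊢; linear_combination this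
  have h2 : b (q + 1) (v + 1) = ((v : ℤ) + 1) * b q v - cseq q (v + 1) := b_succ_eq q v
  have h3 : cseq q (v + 2) = b (q + 1) (v + 1) + cseq q (v + 1) := cseq_succ q (v + 1)
  linear_combination h1 - h3 - h2

lemma cseq_diag (v : ℕ) : cseq v (v + 1) = 0 := by
  apply Finset.sum_eq_zero
  intro r hr
  rw [stirlingFst_nonpos r ((r : ℤ) - v)
    (by have := Finset.mem_range.mp hr; omega), mul_zero]

lemma b_diag (v : ℕ) : b v v = v.factorial := by
  induction v with
  | zero => rw [b_zero_zero]; rfl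
  | succ v ih =>
    have h := b_succ_eq v v
    rw [cseq_diag v, sub_zero, ih] at h
    rw [h, Nat.factorial_succ]
    push_cast; ring

noncomputable def A : ℕ → ℕ → ℚ
  | 0, j => if 2 ≤ j then 1 else 0
  | m + 1, j => ∑ t ∈ Finset.range (j - 1), (1 / (t : ℚ)) * A m t

lemma A_zero_of_le : ∀ m j : ℕ, j ≤ 2 * m + 1 → A m j = 0 := by
  intro m
  induction m with
  | zero => intro j hj; rw [A]; rw [if_neg (by omega)]
  | succ m ih =>
    intro j hj
    rw [A]
    apply Finset.sum_eq_zero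
    intro t ht
    rw [ih t (by have := Finset.mem_range.mp ht; omega), mul_zero]

lemma A_rec (m n : ℕ) :
    A (m + 1) (n + 2) = A (m + 1) (n + 1) + (1 / (n : ℚ)) * A m n := by
  rw [A, A]
  have h1 : n + 2 - 1 = n + 1 := rfl
  have h2 : n + 1 - 1 = n := rfl
  rw [h1, h2, Finset.sum_range_succ]

noncomputable def S (m c j : ℕ) : ℚ :=
  ∑ k ∈ (Finset.univ : Finset (Fin (m + 2) → Fin (c + 1))).filter
      (fun k => (k 0 : ℕ) = 0 ∧ (k (Fin.last (m + 1)) : ℕ) = j ∧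
        ∀ i : Fin (m + 1), (k i.castSucc : ℕ) + 2 ≤ (k i.succ : ℕ)),
    ∏ i : Fin m, (1 : ℚ) / ((k i.succ.castSucc : ℕ) : ℚ)

lemma S_zero (c j : ℕ) (hj : j ≤ c) : S 0 c j = if 2 ≤ j then 1 else 0 := by
  rw [S]
  by_cases h2 : 2 ≤ j
  · rw [if_pos h2]
    have hset : (Finset.univ : Finset (Fin 2 → Fin (c + 1))).filter
        (fun k => (k 0 : ℕ) = 0 ∧ (k (Fin.last 1) : ℕ) = j ∧
          ∀ i : Fin 1, (k i.castSucc : ℕ) + 2 ≤ (k i.succ : ℕ))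
        = {![(0 : Fin (c + 1)), ⟨j, by omega⟩]} := by
      ext k
      simp only [Finset.mem_filter, Finset.mem_univ, true_and, Finset.mem_singleton]
      constructor
      · rintro ⟨hk0, hkl, -⟩
        funext i
        fin_cases i
        · exact Fin.ext (by simpa using hk0)
        · exact Fin.ext (by simpa using hkl)
      · rintro rfl
        refine ⟨rfl, rfl, ?_⟩
        intro i
        fin_cases i
        show ((0 : Fin (c + 1)) : ℕ) + 2 ≤ ((⟨j, by omega⟩ : Fin (c + 1)) : ℕ)
        simpa using h2
    rw [hset, Finset.sum_singleton]
    simp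
  · rw [if_neg h2]
    rw [Finset.filter_false_of_mem, Finset.sum_empty]
    rintro k - ⟨hk0, hkl, hg⟩
    have hgap := hg 0
    have e1 : (0 : Fin 1).castSucc = (0 : Fin 2) := rfl
    have e2 : (0 : Fin 1).succ = Fin.last 1 := rfl
    rw [e1, e2, hk0, hkl] at hgap
    omega

lemma S_succ (m c j : ℕ) (hj : j ≤ c) :
    S (m + 1) c j
      = ∑ t ∈ Finset.range (c + 1), if t + 2 ≤ j then (1 / (t : ℚ)) * S m c t else 0 := by
  rw [S, Finset.sum_filter]
  rw [← Equiv.sum_comp (Fin.snocEquiv (fun _ : Fin (m + 1 + 2) => Fin (c + 1)))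
      (fun k : Fin (m + 1 + 2) → Fin (c + 1) =>
        if (k 0 : ℕ) = 0 ∧ (k (Fin.last (m + 1 + 1)) : ℕ) = j ∧
            ∀ i : Fin (m + 1 + 1), (k i.castSucc : ℕ) + 2 ≤ (k i.succ : ℕ) then
          ∏ i : Fin (m + 1), (1 : ℚ) / ((k i.succ.castSucc : ℕ) : ℚ) else 0)]
  rw [Fintype.sum_prod_type]
  simp only [Fin.snocEquiv_apply]
  -- per-term rewrite of the snoc expression
  have hterm : ∀ (x : Fin (c + 1)) (k' : Fin (m + 1 + 1) → Fin (c + 1)),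
      (if ((Fin.snoc k' x : Fin (m + 1 + 2) → Fin (c + 1)) 0 : ℕ) = 0 ∧
          ((Fin.snoc k' x : Fin (m + 1 + 2) → Fin (c + 1)) (Fin.last (m + 1 + 1)) : ℕ) = j ∧
          (∀ i : Fin (m + 1 + 1),
            ((Fin.snoc k' x : Fin (m + 1 + 2) → Fin (c + 1)) i.castSucc : ℕ) + 2
              ≤ ((Fin.snoc k' x : Fin (m + 1 + 2) → Fin (c + 1)) i.succ : ℕ))
        then ∏ i : Fin (m + 1),
            (1 : ℚ) / (((Fin.snoc k' x : Fin (m + 1 + 2) → Fin (c + 1)) i.succ.castSucc : ℕ) : ℚ)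
        else 0)
      = if (x : ℕ) = j then
          (if ((k' 0 : ℕ) = 0 ∧ ((k' (Fin.last (m + 1)) : ℕ) + 2 ≤ j) ∧
               ∀ i : Fin (m + 1), (k' i.castSucc : ℕ) + 2 ≤ (k' i.succ : ℕ))
           then (∏ i : Fin m, (1 : ℚ) / ((k' i.succ.castSucc : ℕ) : ℚ))
                  * (1 / ((k' (Fin.last (m + 1)) : ℕ) : ℚ))
           else 0)
        else 0 := by
    intro x k'
    have e0 : (Fin.snoc k' x : Fin (m + 1 + 2) → Fin (c + 1)) 0 = k' 0 := by
      have h : (0 : Fin (m + 1 + 2)) = Fin.castSucc (0 : Fin (m + 1 + 1)) := rfl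
      rw [h, Fin.snoc_castSucc]
    have eprod : (∏ i : Fin (m + 1),
          (1 : ℚ) / (((Fin.snoc k' x : Fin (m + 1 + 2) → Fin (c + 1)) i.succ.castSucc : ℕ) : ℚ))
        = (∏ i : Fin m, (1 : ℚ) / ((k' i.succ.castSucc : ℕ) : ℚ))
            * (1 / ((k' (Fin.last (m + 1)) : ℕ) : ℚ)) := by
      rw [Fin.prod_univ_castSucc (fun i : Fin (m + 1) =>
        (1 : ℚ) / (((Fin.snoc k' x : Fin (m + 1 + 2) → Fin (c + 1)) i.succ.castSucc : ℕ) : ℚ))]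
      congr 1
      · apply Finset.prod_congr rfl
        intro i _
        rw [Fin.succ_castSucc, Fin.snoc_castSucc]
      · rw [Fin.succ_last, Fin.snoc_castSucc]
    by_cases hx : (x : ℕ) = j
    · rw [if_pos hx, eprod]
      refine if_congr ?_ rfl rfl
      simp only [e0, Fin.snoc_last, Fin.forall_fin_succ', Fin.snoc_castSucc, Fin.succ_castSucc,
        Fin.succ_last, hx]
      constructor
      · rintro ⟨h1, -, h3, h4⟩
        exact ⟨h1, h4, h3⟩
      · rintro ⟨h1, h2, h3⟩
        exact ⟨h1, trivial, h3, h2⟩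
    · rw [if_neg hx, if_neg]
      rintro ⟨-, h2, -⟩
      rw [Fin.snoc_last] at h2
      exact hx h2
  calc
    ∑ x : Fin (c + 1), ∑ k' : Fin (m + 1 + 1) → Fin (c + 1),
        (if ((Fin.snoc k' x : Fin (m + 1 + 2) → Fin (c + 1)) 0 : ℕ) = 0 ∧
            ((Fin.snoc k' x : Fin (m + 1 + 2) → Fin (c + 1)) (Fin.last (m + 1 + 1)) : ℕ) = j ∧
            (∀ i : Fin (m + 1 + 1),
              ((Fin.snoc k' x : Fin (m + 1 + 2) → Fin (c + 1)) i.castSucc : ℕ) + 2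
                ≤ ((Fin.snoc k' x : Fin (m + 1 + 2) → Fin (c + 1)) i.succ : ℕ))
          then ∏ i : Fin (m + 1),
              (1 : ℚ) / (((Fin.snoc k' x : Fin (m + 1 + 2) → Fin (c + 1)) i.succ.castSucc : ℕ) : ℚ)
          else 0)
      = ∑ x : Fin (c + 1), (if (x : ℕ) = j then
          (∑ k' : Fin (m + 1 + 1) → Fin (c + 1),
            if ((k' 0 : ℕ) = 0 ∧ ((k' (Fin.last (m + 1)) : ℕ) + 2 ≤ j) ∧
               ∀ i : Fin (m + 1), (k' i.castSucc : ℕ) + 2 ≤ (k' i.succ : ℕ))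
            then (∏ i : Fin m, (1 : ℚ) / ((k' i.succ.castSucc : ℕ) : ℚ))
                  * (1 / ((k' (Fin.last (m + 1)) : ℕ) : ℚ))
            else 0) else 0) := by
        apply Finset.sum_congr rfl
        intro x _
        rw [Finset.sum_congr rfl (fun k' _ => hterm x k')]
        split_ifs <;> simp
    _ = ∑ k' : Fin (m + 1 + 1) → Fin (c + 1),
            if ((k' 0 : ℕ) = 0 ∧ ((k' (Fin.last (m + 1)) : ℕ) + 2 ≤ j) ∧
               ∀ i : Fin (m + 1), (k' i.castSucc : ℕ) + 2 ≤ (k' i.succ : ℕ))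
            then (∏ i : Fin m, (1 : ℚ) / ((k' i.succ.castSucc : ℕ) : ℚ))
                  * (1 / ((k' (Fin.last (m + 1)) : ℕ) : ℚ))
            else 0 := by
        rw [Fin.sum_univ_eq_sum_range (fun t => if t = j then
          (∑ k' : Fin (m + 1 + 1) → Fin (c + 1),
            if ((k' 0 : ℕ) = 0 ∧ ((k' (Fin.last (m + 1)) : ℕ) + 2 ≤ j) ∧
               ∀ i : Fin (m + 1), (k' i.castSucc : ℕ) + 2 ≤ (k' i.succ : ℕ))
            then (∏ i : Fin m, (1 : ℚ) / ((k' i.succ.castSucc : ℕ) : ℚ))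
                  * (1 / ((k' (Fin.last (m + 1)) : ℕ) : ℚ))
            else 0) else 0) (c + 1)]
        rw [Finset.sum_ite_eq' (Finset.range (c + 1)) j _]
        rw [if_pos (Finset.mem_range.mpr (by omega))]
    _ = ∑ t ∈ Finset.range (c + 1), (if t + 2 ≤ j then (1 / (t : ℚ)) * S m c t else 0) := by
        -- unfold S on the RHS and collapse
        have hS : ∀ t : ℕ, S m c t = ∑ k' : Fin (m + 2) → Fin (c + 1),
            if ((k' 0 : ℕ) = 0 ∧ (k' (Fin.last (m + 1)) : ℕ) = t ∧
               ∀ i : Fin (m + 1), (k' i.castSucc : ℕ) + 2 ≤ (k' i.succ : ℕ))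
            then ∏ i : Fin m, (1 : ℚ) / ((k' i.succ.castSucc : ℕ) : ℚ)
            else 0 := fun t => by rw [S, Finset.sum_filter]
        have hstep : ∀ t ∈ Finset.range (c + 1),
            (if t + 2 ≤ j then (1 / (t : ℚ)) * S m c t else 0)
            = ∑ k' : Fin (m + 2) → Fin (c + 1),
                (if t + 2 ≤ j then
                  (if ((k' 0 : ℕ) = 0 ∧ (k' (Fin.last (m + 1)) : ℕ) = t ∧
                     ∀ i : Fin (m + 1), (k' i.castSucc : ℕ) + 2 ≤ (k' i.succ : ℕ))
                  then (1 / (t : ℚ)) * ∏ i : Fin m, (1 : ℚ) / ((k' i.succ.castSucc : ℕ) : ℚ)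
                  else 0) else 0) := by
          intro t _
          split_ifs with h
          · rw [hS t, Finset.mul_sum]
            apply Finset.sum_congr rfl
            intro k' _
            split_ifs <;> simp
          · simp
        rw [Finset.sum_congr rfl hstep, Finset.sum_comm]
        apply Finset.sum_congr rfl
        intro k' _
        have hcoll : ∀ t ∈ Finset.range (c + 1),
            (if t + 2 ≤ j then
              (if ((k' 0 : ℕ) = 0 ∧ (k' (Fin.last (m + 1)) : ℕ) = t ∧
                 ∀ i : Fin (m + 1), (k' i.castSucc : ℕ) + 2 ≤ (k' i.succ : ℕ))
              then (1 / (t : ℚ)) * ∏ i : Fin m, (1 : ℚ) / ((k' i.succ.castSucc : ℕ) : ℚ)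
              else 0) else 0)
            = (if t = (k' (Fin.last (m + 1)) : ℕ) then
                (if ((k' 0 : ℕ) = 0 ∧ ((k' (Fin.last (m + 1)) : ℕ) + 2 ≤ j) ∧
                   ∀ i : Fin (m + 1), (k' i.castSucc : ℕ) + 2 ≤ (k' i.succ : ℕ))
                then (∏ i : Fin m, (1 : ℚ) / ((k' i.succ.castSucc : ℕ) : ℚ))
                      * (1 / ((k' (Fin.last (m + 1)) : ℕ) : ℚ))
                else 0) else 0) := by
          intro t _
          by_cases ht : t = (k' (Fin.last (m + 1)) : ℕ)
          · subst ht
            rw [if_pos rfl]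
            by_cases h1 : (k' (Fin.last (m + 1)) : ℕ) + 2 ≤ j
            · rw [if_pos h1]
              by_cases h2 : ((k' 0 : ℕ) = 0 ∧
                  (∀ i : Fin (m + 1), (k' i.castSucc : ℕ) + 2 ≤ (k' i.succ : ℕ)))
              · rw [if_pos ⟨h2.1, rfl, h2.2⟩, if_pos ⟨h2.1, h1, h2.2⟩]; ring
              · rw [if_neg (by rintro ⟨a, b, c⟩; exact h2 ⟨a, c⟩),
                  if_neg (by rintro ⟨a, b, c⟩; exact h2 ⟨a, c⟩)]
            · rw [if_neg h1, if_neg (by rintro ⟨a, b, c⟩; exact h1 b)]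
          · rw [if_neg ht]
            split_ifs with h1 h2 <;>
              first | rfl | exact absurd h2.2.1 (fun hh => ht hh.symm)
        rw [Finset.sum_congr rfl hcoll,
          Finset.sum_ite_eq' (Finset.range (c + 1)) ((k' (Fin.last (m + 1)) : ℕ)) _,
          if_pos (Finset.mem_range.mpr (k' (Fin.last (m + 1))).isLt)]

lemma S_eq_A : ∀ m c j : ℕ, j ≤ c → S m c j = A m j := by
  intro m
  induction m with
  | zero =>
    intro c j h
    rw [S_zero c j h, A]
  | succ m ih =>
    intro c j h
    rw [S_succ m c j h]
    have h1 : ∀ t ∈ Finset.range (c + 1),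
        (if t + 2 ≤ j then (1 / (t : ℚ)) * S m c t else 0)
        = (if t + 2 ≤ j then (1 / (t : ℚ)) * A m t else 0) := by
      intro t ht
      split_ifs with hc
      · rw [ih c t (by have := Finset.mem_range.mp ht; omega)]
      · rfl
    rw [Finset.sum_congr rfl h1, ← Finset.sum_filter]
    have h2 : (Finset.range (c + 1)).filter (fun t => t + 2 ≤ j) = Finset.range (j - 1) := by
      ext t
      simp only [Finset.mem_filter, Finset.mem_range]
      omega
    rw [h2, A]

lemma key : ∀ v q : ℕ, q ≤ v →
    (b q v : ℚ) = (-1 : ℚ) ^ (v - q) * v.factorial * A (v - q) (v + 2) := by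
  intro v
  induction v using Nat.strong_induction_on with
  | _ v ih =>
    intro q hqv
    rcases eq_or_lt_of_le hqv with rfl | hlt
    · rw [Nat.sub_self]
      have hA : A 0 (q + 2) = 1 := by rw [A, if_pos (by omega)]
      rw [hA, b_diag]
      norm_num
    · rcases Nat.eq_zero_or_pos q with rfl | hq
      · obtain ⟨w, rfl⟩ : ∃ w, v = w + 1 := ⟨v - 1, by omega⟩
        rw [b_zero_succ, Nat.sub_zero, A_zero_of_le (w + 1) (w + 1 + 2) (by omega)]
        norm_num
      · obtain ⟨q', rfl⟩ : ∃ q', q = q' + 1 := ⟨q - 1, by omega⟩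
        obtain ⟨v', rfl⟩ : ∃ v', v = v' + 2 := ⟨v - 2, by omega⟩
        have hq'v : q' ≤ v' := by omega
        have h1 := ih (v' + 1) (by omega) q' (by omega)
        have h2 := ih v' (by omega) q' hq'v
        obtain ⟨m, hm⟩ : ∃ m, v' - q' = m := ⟨_, rfl⟩
        have hm1 : v' + 1 - q' = m + 1 := by omega
        have hm2 : v' + 2 - (q' + 1) = m + 1 := by omega
        rw [hm1] at h1
        rw [hm] at h2
        rw [hm2]
        have hb : (b (q' + 1) (v' + 2) : ℚ)
            = ((v' : ℚ) + 2) * (b q' (v' + 1) : ℚ) - ((v' : ℚ) + 1) * (b q' v' : ℚ) := by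
          exact_mod_cast congrArg (fun z : ℤ => (z : ℚ)) (b_rec q' v')
        have hA := A_rec m (v' + 2)
        have hf1 : ((v' + 2).factorial : ℚ) = ((v' : ℚ) + 2) * ((v' + 1).factorial : ℚ) := by
          rw [show v' + 2 = (v' + 1) + 1 from rfl, Nat.factorial_succ]
          push_cast; ring
        have hf2 : ((v' + 1).factorial : ℚ) = ((v' : ℚ) + 1) * ((v'.factorial : ℚ)) := by
          rw [Nat.factorial_succ]; push_cast; ring
        have hne : ((v' : ℚ) + 2) ≠ 0 := by positivity
        rw [hb, h1, h2, hA, hf1, hf2]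
        have hcast : ((v' + 1 : ℕ) : ℚ) = (v' : ℚ) + 1 := by push_cast; ring
        have hcast2 : ((v' + 2 : ℕ) : ℚ) = (v' : ℚ) + 2 := by push_cast; ring
        rw [hcast2]
        field_simp
        ring

/-- Explicit expression: for 0 ≤ q ≤ v,
b(q,v) = (−1)^{v−q} v! ∑ ∏_{i=1}^{v−q} 1/k_i, summed over tuples
0 = k_0 < k_1 < ⋯ < k_{v−q} < k_{v−q+1} = v+2 with all consecutive gaps at least 2. -/
theorem stmt11 (q v : ℕ) (hqv : q ≤ v) :
    (b q v : ℚ) =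
      (-1 : ℚ) ^ (v - q) * v.factorial *
        ∑ k ∈ (Finset.univ : Finset (Fin (v - q + 2) → Fin (v + 3))).filter
            (fun k => (k 0 : ℕ) = 0 ∧ (k (Fin.last (v - q + 1)) : ℕ) = v + 2 ∧
              ∀ i : Fin (v - q + 1), (k i.castSucc : ℕ) + 2 ≤ (k i.succ : ℕ)),
          ∏ i : Fin (v - q), (1 : ℚ) / ((k i.succ.castSucc : ℕ) : ℚ) := by
  have hS : (∑ k ∈ (Finset.univ : Finset (Fin (v - q + 2) → Fin (v + 3))).filter
            (fun k => (k 0 : ℕ) = 0 ∧ (k (Fin.last (v - q + 1)) : ℕ) = v + 2 ∧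
              ∀ i : Fin (v - q + 1), (k i.castSucc : ℕ) + 2 ≤ (k i.succ : ℕ)),
          ∏ i : Fin (v - q), (1 : ℚ) / ((k i.succ.castSucc : ℕ) : ℚ))
      = S (v - q) (v + 2) (v + 2) := rfl
  rw [hS, S_eq_A (v - q) (v + 2) (v + 2) le_rfl, key v q hqv]
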